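/- Let C ⊆ ℝ^d be closed and convex, let f : ℝ^d → ℝ be convex and twice continuously differentiable, and let x₀ be a minimizer of f over C. Suppose there exist ρ > 0 and r > 0 such that the Hessian of f satisfies ⟨v, ∇²f(x)·v⟩ ≥ ρ‖v‖₂² for all x ∈ C ∩ B(x₀, r) and all v ∈ ℝ^d. Let g : ℝ^d → ℝ be convex and λ'-Lipschitz with respect to the Euclidean norm, with λ' < ρ·r. Then every minimizer x̂ of f + g over C satisfies ‖x̂ − x₀‖₂ ≤ λ'/ρ. -/

import Mathlib

open Set Filter Topology

/-- constrained perturbation bound.  If `f` is convex and locally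
`ρ`-strongly convex (in the Hessian sense) near its constrained minimizer `x₀`
over a closed convex set `C`, and `g` is convex and `λ'`-Lipschitz with
`λ' < ρ·r`, then every minimizer of `f + g` over `C` is within `λ'/ρ` of `x₀`. -/
theorem stmt17 (d : ℕ) (C : Set (EuclideanSpace ℝ (Fin d)))
    (hCcl : IsClosed C) (hC : Convex ℝ C)
    (f g : EuclideanSpace ℝ (Fin d) → ℝ)
    (hf : ConvexOn ℝ Set.univ f) (hfC2 : ContDiff ℝ 2 f)
    (x₀ : EuclideanSpace ℝ (Fin d)) (hx₀ : x₀ ∈ C) (hx₀min : ∀ x ∈ C, f x₀ ≤ f x)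
    (ρ r : ℝ) (hρ : 0 < ρ) (hr : 0 < r)
    (hHess : ∀ x ∈ C ∩ Metric.closedBall x₀ r, ∀ v : EuclideanSpace ℝ (Fin d),
      ρ * ‖v‖ ^ 2 ≤ fderiv ℝ (fderiv ℝ f) x v v)
    (hg : ConvexOn ℝ Set.univ g)
    (lam' : ℝ) (hlam' : 0 ≤ lam') (hgL : ∀ u v, |g u - g v| ≤ lam' * ‖u - v‖)
    (hsmall : lam' < ρ * r) :
    ∀ xhat ∈ C, (∀ x ∈ C, f xhat + g xhat ≤ f x + g x) → ‖xhat - x₀‖ ≤ lam' / ρ := by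
  intro xhat hxhat hmin
  by_contra hcon
  push_neg at hcon
  set h : EuclideanSpace ℝ (Fin d) := xhat - x₀ with hh
  set D : ℝ := ‖h‖ with hDdef
  have hD0 : 0 < D := lt_of_le_of_lt (div_nonneg hlam' hρ.le) hcon
  set γ : ℝ → EuclideanSpace ℝ (Fin d) := fun t => x₀ + t • h with hγ
  have hγ0 : γ 0 = x₀ := by simp [hγ]
  have hγ1 : γ 1 = xhat := by simp [hγ, hh]
  have hγderiv : ∀ t : ℝ, HasDerivAt γ h t := by
    intro t
    have := ((hasDerivAt_id t).smul_const h).const_add x₀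
    rw [one_smul] at this
    exact this
  have hmem : ∀ t ∈ Set.Icc (0:ℝ) 1, γ t ∈ C := by
    intro t ht
    have h1 := hC hx₀ hxhat (by linarith [ht.2] : (0:ℝ) ≤ 1 - t) ht.1 (by ring)
    have : γ t = (1 - t) • x₀ + t • xhat := by
      simp only [hγ, hh]
      module
    rw [this]; exact h1
  have hdist : ∀ t : ℝ, 0 ≤ t → ‖γ t - x₀‖ = t * D := by
    intro t ht
    have : γ t - x₀ = t • h := by simp [hγ]
    rw [this, norm_smul, Real.norm_eq_abs, abs_of_nonneg ht]
  have hfdiff : Differentiable ℝ f := hfC2.differentiable (by norm_num)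
  set φ : ℝ → ℝ := fun t => f (γ t) with hφdef
  set φ' : ℝ → ℝ := fun t => fderiv ℝ f (γ t) h with hφ'def
  have hφderiv : ∀ t, HasDerivAt φ (φ' t) t := fun t =>
    (hfdiff (γ t)).hasFDerivAt.comp_hasDerivAt t (hγderiv t)
  have hF1 : ContDiff ℝ 1 (fderiv ℝ f) := hfC2.fderiv_right (by norm_num)
  have hφ'deriv : ∀ t, HasDerivAt φ' (fderiv ℝ (fderiv ℝ f) (γ t) h h) t := by
    intro t
    have h1 : HasDerivAt (fun s => fderiv ℝ f (γ s)) (fderiv ℝ (fderiv ℝ f) (γ t) h) t :=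
      ((hF1.differentiable (by norm_num) (γ t)).hasFDerivAt).comp_hasDerivAt t (hγderiv t)
    have h2 := (ContinuousLinearMap.apply ℝ ℝ h).hasFDerivAt.comp_hasDerivAt t h1
    exact h2
  -- convexity of φ
  have hφconv : ConvexOn ℝ Set.univ φ := by
    have h1 := hf.comp_affineMap
      (AffineMap.lineMap x₀ xhat : ℝ →ᵃ[ℝ] EuclideanSpace ℝ (Fin d))
    rw [Set.preimage_univ] at h1
    have heq : (f ∘ (AffineMap.lineMap x₀ xhat : ℝ →ᵃ[ℝ] EuclideanSpace ℝ (Fin d))) = φ := by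
      funext t
      simp only [Function.comp_apply, AffineMap.lineMap_apply_module', hφdef, hγ, hh]
      rw [add_comm]
    rwa [heq] at h1
  -- φ'(0) ≥ 0
  have hφ'0 : 0 ≤ φ' 0 := by
    have hts : Tendsto (slope φ 0) (𝓝[>] (0:ℝ)) (𝓝 (φ' 0)) :=
      (hasDerivAt_iff_tendsto_slope.1 (hφderiv 0)).mono_left
        (nhdsWithin_mono 0 fun x hx => (ne_of_gt hx : x ≠ 0))
    refine ge_of_tendsto hts ?_
    filter_upwards [Ioo_mem_nhdsGT_of_mem (by norm_num : (0:ℝ) ∈ Set.Ico 0 1)] with t ht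
    have hle : φ 0 ≤ φ t := by
      have := hx₀min (γ t) (hmem t ⟨ht.1.le, ht.2.le⟩)
      simpa [hφdef, hγ0] using this
    rw [slope_def_field]
    apply div_nonneg (by linarith) (by simp [ht.1.le])
  set T : ℝ := min 1 (r / D) with hTdef
  have hT1 : T ≤ 1 := min_le_left _ _
  have hT0 : 0 < T := lt_min one_pos (div_pos hr hD0)
  -- monotonicity of φ' - ρ D² t on [0,T]
  have hmono : MonotoneOn (fun t => φ' t - ρ * D ^ 2 * t) (Set.Icc 0 T) := by
    have hd : ∀ t : ℝ, HasDerivAt (fun t => φ' t - ρ * D ^ 2 * t)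
        (fderiv ℝ (fderiv ℝ f) (γ t) h h - ρ * D ^ 2) t := by
      intro t
      have := (hφ'deriv t).sub ((hasDerivAt_id t).const_mul (ρ * D ^ 2))
      simp only [id, mul_one] at this
      exact this
    apply monotoneOn_of_deriv_nonneg (convex_Icc 0 T)
    · exact fun t _ => ((hd t).continuousAt).continuousWithinAt
    · exact fun t _ => ((hd t).differentiableAt).differentiableWithinAt
    · intro t ht
      rw [interior_Icc] at ht
      rw [(hd t).deriv]
      have hmemC : γ t ∈ C ∩ Metric.closedBall x₀ r := by
        constructor
        · exact hmem t ⟨ht.1.le, ht.2.le.trans hT1⟩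
        · rw [Metric.mem_closedBall, dist_eq_norm, hdist t ht.1.le]
          calc t * D ≤ (r / D) * D := by
                have : t ≤ r / D := ht.2.le.trans (min_le_right _ _)
                exact mul_le_mul_of_nonneg_right this hD0.le
            _ = r := by field_simp
      have := hHess (γ t) hmemC h
      rw [← hDdef] at this
      linarith
  -- choose t₀
  set t₀ : ℝ := (lam' / (ρ * D) + T) / 2 with ht₀def
  have hρD : 0 < ρ * D := mul_pos hρ hD0
  have hlamlt : lam' / (ρ * D) < T := by
    apply lt_min
    · rw [div_lt_one hρD]
      calc lam' = ρ * (lam' / ρ) := by field_simp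
        _ < ρ * D := by exact mul_lt_mul_of_pos_left hcon hρ
    · rw [div_lt_div_iff₀ hρD hD0]
      calc lam' * D < ρ * r * D := mul_lt_mul_of_pos_right hsmall hD0
        _ = r * (ρ * D) := by ring
  have hlam0 : 0 ≤ lam' / (ρ * D) := div_nonneg hlam' hρD.le
  have ht₀pos : 0 < t₀ := by rw [ht₀def]; linarith
  have ht₀T : t₀ < T := by rw [ht₀def]; linarith
  have ht₀1 : t₀ < 1 := lt_of_lt_of_le ht₀T hT1
  have ht₀gt : lam' / (ρ * D) < t₀ := by rw [ht₀def]; linarith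
  -- lower bound on φ' t₀
  have hlow : ρ * D ^ 2 * t₀ ≤ φ' t₀ := by
    have := hmono (Set.mem_Icc.2 ⟨le_rfl, hT0.le⟩) (Set.mem_Icc.2 ⟨ht₀pos.le, ht₀T.le⟩) ht₀pos.le
    simp only [mul_zero, sub_zero] at this
    linarith
  -- upper bound via slope
  have hslope : φ' t₀ ≤ (φ 1 - φ t₀) / (1 - t₀) := by
    have := hφconv.le_slope_of_hasDerivAt (Set.mem_univ t₀) (Set.mem_univ 1) ht₀1 (hφderiv t₀)
    rwa [slope_def_field] at this
  -- perturbation bound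
  have hpert : φ 1 - φ t₀ ≤ lam' * ((1 - t₀) * D) := by
    have hmin' := hmin (γ t₀) (hmem t₀ ⟨ht₀pos.le, ht₀1.le⟩)
    have hγdiff : ‖γ t₀ - xhat‖ = (1 - t₀) * D := by
      have : γ t₀ - xhat = -((1 - t₀) • h) := by
        simp only [hγ, hh]
        module
      rw [this, norm_neg, norm_smul, Real.norm_eq_abs, abs_of_nonneg (by linarith)]
    have hgbound : g (γ t₀) - g xhat ≤ lam' * ((1 - t₀) * D) := by
      have := hgL (γ t₀) xhat
      rw [hγdiff] at this
      exact (le_abs_self _).trans this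
    have : f xhat - f (γ t₀) ≤ g (γ t₀) - g xhat := by linarith
    calc φ 1 - φ t₀ = f xhat - f (γ t₀) := by rw [hφdef]; simp [hγ1]
      _ ≤ g (γ t₀) - g xhat := this
      _ ≤ lam' * ((1 - t₀) * D) := hgbound
  -- combine
  have h1t₀ : 0 < 1 - t₀ := by linarith
  have hkey : ρ * D ^ 2 * t₀ ≤ lam' * D := by
    have h2 : (φ 1 - φ t₀) / (1 - t₀) ≤ lam' * D := by
      rw [div_le_iff₀ h1t₀]
      calc φ 1 - φ t₀ ≤ lam' * ((1 - t₀) * D) := hpert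
        _ = lam' * D * (1 - t₀) := by ring
    linarith
  have : ρ * D * t₀ ≤ lam' := by
    have := (mul_le_mul_iff_left₀ hD0).2 (le_of_eq (rfl : ρ * D * t₀ = ρ * D * t₀))
    nlinarith
  have : lam' < ρ * D * t₀ := by
    rw [div_lt_iff₀ hρD] at ht₀gt
    linarith
  linarith
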